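/- A matrix M ∈ Ω₂ = Sp(4,ℝ) satisfies M<Z> ∈ Ĥ₂ for every Z ∈ Ĥ₂ if and only if MQ = QM or MQ = −QM. Consequently Ω̂₂ := {M ∈ Ω₂ : M<Z> ∈ Ĥ₂ for all Z ∈ Ĥ₂} = {M ∈ Ω₂ : MQ = ±QM} is a subgroup of Ω₂ acting on Ĥ₂ by (M,Z) ↦ M<Z>. -/

import Mathlib

open Matrix Complex

noncomputable section

abbrev Mat2 : Type := Matrix (Fin 2) (Fin 2) ℂ
abbrev Mat2R : Type := Matrix (Fin 2) (Fin 2) ℝ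
abbrev Mat4 : Type := Matrix (Fin 2 ⊕ Fin 2) (Fin 2 ⊕ Fin 2) ℝ

/-- `q = [[0,1],[1,0]]`. -/
def qR : Mat2R := !![0, 1; 1, 0]

/-- `J = [[0, I₂],[−I₂, 0]]` (4×4). -/
def Jmat : Mat4 := Matrix.fromBlocks 0 1 (-1) 0

/-- `Q = diag(q, q)` (4×4). -/
def Qmat : Mat4 := Matrix.fromBlocks qR 0 0 qR

/-- `Ω₂ = Sp(4,ℝ) = {M : ᵗM J M = J}`. -/
def Omega2 : Set Mat4 := {M | Mᵀ * Jmat * M = Jmat}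

/-- The new Siegel upper half space `Ĥ₂`: bi-symmetric `Z = [[τ,z],[z,τ]]` with `Im τ > |Im z|`. -/
def Hhat : Set Mat2 :=
  {Z | Z 1 1 = Z 0 0 ∧ Z 1 0 = Z 0 1 ∧ |(Z 0 1).im| < (Z 0 0).im}

/-- The action `M<Z> = (AZ+B)(CZ+D)⁻¹` of a real 4×4 matrix in 2×2 blocks on `Z ∈ ℂ^{2×2}`. -/
def act (M : Mat4) (Z : Mat2) : Mat2 :=
  (M.toBlocks₁₁.map Complex.ofReal * Z + M.toBlocks₁₂.map Complex.ofReal) *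
    (M.toBlocks₂₁.map Complex.ofReal * Z + M.toBlocks₂₂.map Complex.ofReal)⁻¹

/-- `Ω̂₂ = {M ∈ Ω₂ : M<Z> ∈ Ĥ₂ for all Z ∈ Ĥ₂}`. -/
def OmegaHat : Set Mat4 := {M | M ∈ Omega2 ∧ ∀ Z ∈ Hhat, act M Z ∈ Hhat}

/-! In the eigenbasis `(1, 1)`, `(1, -1)` of `q`, the matrices commuting with `q` are the
diagonal ones, and `Ĥ₂` becomes `ℍ × ℍ`. If `MQ = QM`, every block of `M` commutes with `q`, so
`M` acts on the two factors by the Möbius transformations of two matrices in `SL₂(ℝ)`. If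
`MQ = -QM`, then `MK` commutes with `Q` for `K = diag(k, k)`, `k = diag(1, -1)`, and `K` preserves
`Ĥ₂` by swapping the two factors.

Conversely, `Q` acts trivially on `Ĥ₂`, so if `M` preserves `Ĥ₂` then `N = M⁻¹QMQ` fixes `Ĥ₂`
pointwise. Comparing `AZ + B = Z(CZ + D)` at `Z = i, 2i, 3i` and at one non-scalar point forces
`N = diag(A, A)` with `A` orthogonal and commuting with `q`, i.e. `N ∈ {±1, ±Q}`. Since `M` is
invertible, `N = ±Q` would give `Q = ±1`; hence `QMQ = ±M`. -/

lemma moebius_ne_zero_and_im_pos {a b c d : ℝ} (h : a * d - b * c = 1) {t : ℂ} (ht : 0 < t.im) :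
    (c * t + d : ℂ) ≠ 0 ∧ 0 < ((a * t + b) / (c * t + d)).im := by
  let g : SpecialLinearGroup (Fin 2) ℝ := ⟨!![a, b; c, d], by rw [det_fin_two_of]; linarith⟩
  let τ : UpperHalfPlane := ⟨t, ht⟩
  refine ⟨UpperHalfPlane.denom_ne_zero g τ, ?_⟩
  have := (g • τ).im_pos
  rwa [UpperHalfPlane.im, UpperHalfPlane.coe_specialLinearGroup_apply] at this

/-- The matrix commuting with `q` that has eigenvalue `s` on `(1, 1)` and `t` on `(1, -1)`. -/
def bisym (s t : ℂ) : Mat2 := !![(s + t) / 2, (s - t) / 2; (s - t) / 2, (s + t) / 2]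

lemma bisym_mul (s t s' t' : ℂ) : bisym s t * bisym s' t' = bisym (s * s') (t * t') := by
  ext i j; fin_cases i <;> fin_cases j <;> simp [bisym, mul_apply] <;> ring

lemma bisym_add (s t s' t' : ℂ) : bisym s t + bisym s' t' = bisym (s + s') (t + t') := by
  ext i j; fin_cases i <;> fin_cases j <;> simp [bisym] <;> ring

lemma bisym_sub (s t s' t' : ℂ) : bisym s t - bisym s' t' = bisym (s - s') (t - t') := by
  ext i j; fin_cases i <;> fin_cases j <;> simp [bisym] <;> ring

lemma bisym_one : bisym 1 1 = 1 := by
  ext i j; fin_cases i <;> fin_cases j <;> simp [bisym]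

lemma transpose_bisym (s t : ℂ) : (bisym s t)ᵀ = bisym s t := by
  ext i j; fin_cases i <;> fin_cases j <;> simp [bisym]

lemma bisym_inj {s t s' t' : ℂ} : bisym s t = bisym s' t' ↔ s = s' ∧ t = t' := by
  refine ⟨fun h => ?_, fun h => by rw [h.1, h.2]⟩
  have h₀₀ := congrFun (congrFun h 0) 0
  have h₀₁ := congrFun (congrFun h 0) 1
  simp only [bisym, of_apply, cons_val', cons_val_zero, cons_val_one, empty_val',
    cons_val_fin_one] at h₀₀ h₀₁
  exact ⟨by linear_combination h₀₀ + h₀₁, by linear_combination h₀₀ - h₀₁⟩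

lemma inv_bisym {s t : ℂ} (hs : s ≠ 0) (ht : t ≠ 0) : (bisym s t)⁻¹ = bisym s⁻¹ t⁻¹ :=
  inv_eq_right_inv (by rw [bisym_mul, mul_inv_cancel₀ hs, mul_inv_cancel₀ ht, bisym_one])

lemma mem_Hhat_iff {Z : Mat2} : Z ∈ Hhat ↔ ∃ s t : ℂ, 0 < s.im ∧ 0 < t.im ∧ Z = bisym s t := by
  constructor
  · rintro ⟨h₁₁, h₁₀, him⟩
    obtain ⟨hlt, hgt⟩ := abs_lt.1 him
    refine ⟨Z 0 0 + Z 0 1, Z 0 0 - Z 0 1, by simp only [add_im]; linarith,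
      by simp only [sub_im]; linarith, ?_⟩
    ext i j; fin_cases i <;> fin_cases j <;> simp [bisym, h₁₁, h₁₀]
  · rintro ⟨s, t, hs, ht, rfl⟩
    refine ⟨by simp [bisym], by simp [bisym], ?_⟩
    simp only [bisym, of_apply, cons_val', cons_val_zero, cons_val_one, empty_val',
      cons_val_fin_one, div_ofNat_im, sub_im, add_im]
    rw [abs_lt]; constructor <;> linarith

lemma entries_of_mul_qR_eq_qR_mul {X : Mat2R} (h : X * qR = qR * X) : X 1 1 = X 0 0 ∧ X 1 0 = X 0 1 :=
  ⟨by simpa [qR, mul_apply, Fin.sum_univ_two] using (congrFun (congrFun h 0) 1).symm,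
    by simpa [qR, mul_apply, Fin.sum_univ_two] using (congrFun (congrFun h 0) 0).symm⟩

lemma map_ofReal_eq_bisym {X : Mat2R} (h : X * qR = qR * X) :
    X.map ofReal = bisym ↑(X 0 0 + X 0 1) ↑(X 0 0 - X 0 1) := by
  obtain ⟨h₁₁, h₁₀⟩ := entries_of_mul_qR_eq_qR_mul h
  ext i j; fin_cases i <;> fin_cases j <;> simp [bisym, h₁₁, h₁₀]

lemma map_qR : qR.map ofReal = bisym 1 (-1) := by
  rw [map_ofReal_eq_bisym rfl]; simp [qR]

section Blocks

variable {α l m n o p r : Type*} [Fintype l] [Fintype m] [NonUnitalNonAssocSemiring α]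
  (M : Matrix (n ⊕ o) (l ⊕ m) α) (N : Matrix (l ⊕ m) (p ⊕ r) α)

lemma toBlocks₁₁_mul :
    (M * N).toBlocks₁₁ = M.toBlocks₁₁ * N.toBlocks₁₁ + M.toBlocks₁₂ * N.toBlocks₂₁ := by
  ext i j; simp [toBlocks₁₁, toBlocks₁₂, toBlocks₂₁, mul_apply, Fintype.sum_sum_type]

lemma toBlocks₁₂_mul :
    (M * N).toBlocks₁₂ = M.toBlocks₁₁ * N.toBlocks₁₂ + M.toBlocks₁₂ * N.toBlocks₂₂ := by
  ext i j; simp [toBlocks₁₁, toBlocks₁₂, toBlocks₂₂, mul_apply, Fintype.sum_sum_type]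

lemma toBlocks₂₁_mul :
    (M * N).toBlocks₂₁ = M.toBlocks₂₁ * N.toBlocks₁₁ + M.toBlocks₂₂ * N.toBlocks₂₁ := by
  ext i j; simp [toBlocks₁₁, toBlocks₂₂, toBlocks₂₁, mul_apply, Fintype.sum_sum_type]

lemma toBlocks₂₂_mul :
    (M * N).toBlocks₂₂ = M.toBlocks₂₁ * N.toBlocks₁₂ + M.toBlocks₂₂ * N.toBlocks₂₂ := by
  ext i j; simp [toBlocks₁₂, toBlocks₂₂, toBlocks₂₁, mul_apply, Fintype.sum_sum_type]

end Blocks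

lemma map_ofReal_mul (X Y : Mat2R) : (X * Y).map ofReal = X.map ofReal * Y.map ofReal :=
  Matrix.map_mul (f := ofRealHom)

def actNum (M : Mat4) (Z : Mat2) : Mat2 := M.toBlocks₁₁.map ofReal * Z + M.toBlocks₁₂.map ofReal

def actDen (M : Mat4) (Z : Mat2) : Mat2 := M.toBlocks₂₁.map ofReal * Z + M.toBlocks₂₂.map ofReal

lemma act_eq (M : Mat4) (Z : Mat2) : act M Z = actNum M Z * (actDen M Z)⁻¹ := rfl

section Cocycle

variable {M N : Mat4} {Z : Mat2} (h : IsUnit (actDen N Z).det)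
include h

lemma act_mul_actDen : act N Z * actDen N Z = actNum N Z :=
  nonsing_inv_mul_cancel_right _ _ h

lemma actNum_mul : actNum (M * N) Z = actNum M (act N Z) * actDen N Z := by
  have e : actNum (M * N) Z =
      M.toBlocks₁₁.map ofReal * actNum N Z + M.toBlocks₁₂.map ofReal * actDen N Z := by
    simp only [actNum, actDen, toBlocks₁₁_mul, toBlocks₁₂_mul, Matrix.map_add _ ofReal_add,
      map_ofReal_mul]
    noncomm_ring
  rw [e, ← act_mul_actDen h]
  simp only [actNum]
  noncomm_ring

lemma actDen_mul : actDen (M * N) Z = actDen M (act N Z) * actDen N Z := by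
  have e : actDen (M * N) Z =
      M.toBlocks₂₁.map ofReal * actNum N Z + M.toBlocks₂₂.map ofReal * actDen N Z := by
    simp only [actNum, actDen, toBlocks₂₁_mul, toBlocks₂₂_mul, Matrix.map_add _ ofReal_add,
      map_ofReal_mul]
    noncomm_ring
  rw [e, ← act_mul_actDen h]
  simp only [actDen]
  noncomm_ring

lemma act_mul : act (M * N) Z = act M (act N Z) := by
  rw [act_eq, actNum_mul h, actDen_mul h, Matrix.mul_inv_rev, ← mul_assoc,
    mul_nonsing_inv_cancel_right _ _ h, ← act_eq]

end Cocycle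

lemma act_one (Z : Mat2) : act 1 Z = Z := by
  rw [act, ← fromBlocks_one (l := Fin 2) (m := Fin 2) (α := ℝ), toBlocks_fromBlocks₁₁,
    toBlocks_fromBlocks₁₂, toBlocks_fromBlocks₂₁, toBlocks_fromBlocks₂₂]
  simp

lemma zero_notMem_Hhat : (0 : Mat2) ∉ Hhat := by simp [Hhat]

lemma isUnit_det_actDen {M : Mat4} (hM : Set.MapsTo (act M) Hhat Hhat) {Z : Mat2}
    (hZ : Z ∈ Hhat) : IsUnit (actDen M Z).det := by
  by_contra hu
  apply zero_notMem_Hhat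
  simpa [act_eq, nonsing_inv_apply_not_isUnit _ hu] using hM hZ

lemma mapsTo_act_mul {M N : Mat4} (hM : Set.MapsTo (act M) Hhat Hhat)
    (hN : Set.MapsTo (act N) Hhat Hhat) : Set.MapsTo (act (M * N)) Hhat Hhat := fun Z hZ => by
  rw [act_mul (isUnit_det_actDen hN hZ)]; exact hM (hN hZ)

lemma Jmat_mul_self : Jmat * Jmat = -1 := by
  simp [Jmat, fromBlocks_multiply, ← fromBlocks_one, fromBlocks_neg]

namespace Omega2

lemma isUnit_det {M : Mat4} (hM : M ∈ Omega2) : IsUnit M.det := by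
  refine isUnit_det_of_left_inverse (B := -(Jmat * Mᵀ * Jmat)) ?_
  have hM' : Mᵀ * Jmat * M = Jmat := hM
  rw [neg_mul, mul_assoc, mul_assoc, ← mul_assoc Mᵀ, hM', Jmat_mul_self, neg_neg]

lemma one_mem : (1 : Mat4) ∈ Omega2 := by
  simp [Omega2]

lemma mul_mem {M N : Mat4} (hM : M ∈ Omega2) (hN : N ∈ Omega2) : M * N ∈ Omega2 := by
  have hM' : Mᵀ * Jmat * M = Jmat := hM
  have hN' : Nᵀ * Jmat * N = Jmat := hN
  show (M * N)ᵀ * Jmat * (M * N) = Jmat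
  calc (M * N)ᵀ * Jmat * (M * N) = Nᵀ * (Mᵀ * Jmat * M) * N := by
        rw [transpose_mul]; noncomm_ring
    _ = Jmat := by rw [hM', hN']

lemma inv_mem {M : Mat4} (hM : M ∈ Omega2) : M⁻¹ ∈ Omega2 := by
  have hM' : Mᵀ * Jmat * M = Jmat := hM
  show (M⁻¹)ᵀ * Jmat * M⁻¹ = Jmat
  calc (M⁻¹)ᵀ * Jmat * M⁻¹ = (M⁻¹)ᵀ * (Mᵀ * Jmat * M) * M⁻¹ := by rw [hM']
    _ = (M * M⁻¹)ᵀ * Jmat * (M * M⁻¹) := by rw [transpose_mul]; noncomm_ring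
    _ = Jmat := by rw [mul_nonsing_inv _ (isUnit_det hM)]; simp

lemma transpose_toBlocks₁₁_mul_toBlocks₂₂_sub {M : Mat4} (hM : M ∈ Omega2) :
    M.toBlocks₁₁ᵀ * M.toBlocks₂₂ - M.toBlocks₂₁ᵀ * M.toBlocks₁₂ = 1 := by
  have e : (fromBlocks M.toBlocks₁₁ M.toBlocks₁₂ M.toBlocks₂₁ M.toBlocks₂₂)ᵀ * Jmat *
      fromBlocks M.toBlocks₁₁ M.toBlocks₁₂ M.toBlocks₂₁ M.toBlocks₂₂ = Jmat := by
    rw [fromBlocks_toBlocks]; exact hM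
  rw [Jmat, fromBlocks_transpose, fromBlocks_multiply, fromBlocks_multiply] at e
  have e₁₂ := congrArg toBlocks₁₂ e
  simp only [toBlocks_fromBlocks₁₂] at e₁₂
  rw [← e₁₂]; noncomm_ring

lemma fromBlocks_diag_mem {g : Mat2R} (hg : gᵀ * g = 1) : fromBlocks g 0 0 g ∈ Omega2 := by
  simp [Omega2, Jmat, fromBlocks_transpose, fromBlocks_multiply, hg]

end Omega2

lemma act_fromBlocks_diag (g : Mat2R) (Z : Mat2) :
    act (fromBlocks g 0 0 g) Z = g.map ofReal * Z * (g.map ofReal)⁻¹ := by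
  simp [act]

lemma qR_mul_self : qR * qR = 1 := by simp [qR, Matrix.one_fin_two]

lemma Qmat_mul_self : Qmat * Qmat = 1 := by
  simp [Qmat, fromBlocks_multiply, qR_mul_self]

lemma Qmat_mem : Qmat ∈ Omega2 :=
  Omega2.fromBlocks_diag_mem <| by
    ext i j; fin_cases i <;> fin_cases j <;> simp [qR, mul_apply, Fin.sum_univ_two]

lemma Qmat_ne_one : Qmat ≠ 1 := fun h => by
  simpa [Qmat, qR] using congrFun (congrFun h (Sum.inl 0)) (Sum.inl 0)

lemma Qmat_ne_neg_one : Qmat ≠ -1 := fun h => by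
  simpa [Qmat, qR] using congrFun (congrFun h (Sum.inl 0)) (Sum.inl 0)

lemma act_Qmat {Z : Mat2} (hZ : Z ∈ Hhat) : act Qmat Z = Z := by
  obtain ⟨s, t, -, -, rfl⟩ := mem_Hhat_iff.1 hZ
  rw [Qmat, act_fromBlocks_diag, map_qR, inv_bisym one_ne_zero (neg_ne_zero.2 one_ne_zero),
    bisym_mul, bisym_mul]
  simp

lemma mapsTo_act_Qmat : Set.MapsTo (act Qmat) Hhat Hhat := fun Z hZ => by
  rwa [act_Qmat hZ]

def kR : Mat2R := !![1, 0; 0, -1]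

def Kmat : Mat4 := fromBlocks kR 0 0 kR

lemma kR_mul_self : kR * kR = 1 := by simp [kR, Matrix.one_fin_two]

lemma kR_mul_qR : kR * qR = -(qR * kR) := by simp [kR, qR]

lemma Kmat_mul_self : Kmat * Kmat = 1 := by
  simp [Kmat, fromBlocks_multiply, kR_mul_self]

lemma Kmat_mul_Qmat : Kmat * Qmat = -(Qmat * Kmat) := by
  simp [Kmat, Qmat, fromBlocks_multiply, kR_mul_qR, fromBlocks_neg]

lemma Kmat_mem : Kmat ∈ Omega2 :=
  Omega2.fromBlocks_diag_mem <| by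
    ext i j; fin_cases i <;> fin_cases j <;> simp [kR, mul_apply, Fin.sum_univ_two]

lemma act_Kmat_bisym (s t : ℂ) : act Kmat (bisym s t) = bisym t s := by
  have hk : kR.map ofReal * kR.map ofReal = 1 := by
    rw [← map_ofReal_mul, kR_mul_self]; simp
  rw [Kmat, act_fromBlocks_diag, inv_eq_right_inv hk]
  ext i j; fin_cases i <;> fin_cases j <;> simp [kR, bisym, mul_apply] <;> ring

lemma mapsTo_act_Kmat : Set.MapsTo (act Kmat) Hhat Hhat := fun Z hZ => by
  obtain ⟨s, t, hs, ht, rfl⟩ := mem_Hhat_iff.1 hZ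
  exact mem_Hhat_iff.2 ⟨t, s, ht, hs, act_Kmat_bisym s t⟩

lemma toBlocks_commute_qR {M : Mat4} (hc : M * Qmat = Qmat * M) :
    M.toBlocks₁₁ * qR = qR * M.toBlocks₁₁ ∧ M.toBlocks₁₂ * qR = qR * M.toBlocks₁₂ ∧
      M.toBlocks₂₁ * qR = qR * M.toBlocks₂₁ ∧ M.toBlocks₂₂ * qR = qR * M.toBlocks₂₂ := by
  refine ⟨?_, ?_, ?_, ?_⟩
  · simpa [toBlocks₁₁_mul, Qmat] using congrArg toBlocks₁₁ hc
  · simpa [toBlocks₁₂_mul, Qmat] using congrArg toBlocks₁₂ hc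
  · simpa [toBlocks₂₁_mul, Qmat] using congrArg toBlocks₂₁ hc
  · simpa [toBlocks₂₂_mul, Qmat] using congrArg toBlocks₂₂ hc

section BisymBlocks

variable {M : Mat4} {a b c d a' b' c' d' : ℝ} (hA : M.toBlocks₁₁.map ofReal = bisym a a')
  (hB : M.toBlocks₁₂.map ofReal = bisym b b') (hC : M.toBlocks₂₁.map ofReal = bisym c c')
  (hD : M.toBlocks₂₂.map ofReal = bisym d d')
include hA hB hC hD

lemma det_eq_one_of_bisym_blocks (hM : M ∈ Omega2) :
    a * d - b * c = 1 ∧ a' * d' - b' * c' = 1 := by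
  have e := congrArg (·.map ofReal) (Omega2.transpose_toBlocks₁₁_mul_toBlocks₂₂_sub hM)
  simp only [Matrix.map_sub _ ofReal_sub, map_ofReal_mul, transpose_map, hA, hB, hC, hD,
    transpose_bisym, bisym_mul, bisym_sub, Matrix.map_one _ ofReal_zero ofReal_one, ← bisym_one,
    bisym_inj] at e
  exact ⟨by exact_mod_cast (by linear_combination e.1 : (a * d - b * c : ℂ) = 1),
    by exact_mod_cast (by linear_combination e.2 : (a' * d' - b' * c' : ℂ) = 1)⟩

lemma act_bisym_of_bisym_blocks {s t : ℂ} (hs : ↑c * s + ↑d ≠ 0) (ht : ↑c' * t + ↑d' ≠ 0) :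
    act M (bisym s t) = bisym ((a * s + b) / (c * s + d)) ((a' * t + b') / (c' * t + d')) := by
  rw [act, hA, hB, hC, hD, bisym_mul, bisym_mul, bisym_add, bisym_add, inv_bisym hs ht, bisym_mul]
  rfl

end BisymBlocks

lemma mapsTo_act_of_commute {M : Mat4} (hM : M ∈ Omega2) (hc : M * Qmat = Qmat * M) :
    Set.MapsTo (act M) Hhat Hhat := by
  obtain ⟨hA, hB, hC, hD⟩ := toBlocks_commute_qR hc
  replace hA := map_ofReal_eq_bisym hA
  replace hB := map_ofReal_eq_bisym hB
  replace hC := map_ofReal_eq_bisym hC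
  replace hD := map_ofReal_eq_bisym hD
  obtain ⟨h, h'⟩ := det_eq_one_of_bisym_blocks hA hB hC hD hM
  intro Z hZ
  obtain ⟨s, t, hs, ht, rfl⟩ := mem_Hhat_iff.1 hZ
  obtain ⟨hs₀, hs'⟩ := moebius_ne_zero_and_im_pos h hs
  obtain ⟨ht₀, ht'⟩ := moebius_ne_zero_and_im_pos h' ht
  rw [act_bisym_of_bisym_blocks hA hB hC hD hs₀ ht₀]
  exact mem_Hhat_iff.2 ⟨_, _, hs', ht', rfl⟩

lemma mapsTo_act_of_anticommute {M : Mat4} (hM : M ∈ Omega2) (hc : M * Qmat = -(Qmat * M)) :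
    Set.MapsTo (act M) Hhat Hhat := by
  have hMK : M * Kmat * Qmat = Qmat * (M * Kmat) := by
    rw [mul_assoc, Kmat_mul_Qmat, mul_neg, ← mul_assoc, hc]; noncomm_ring
  have h := mapsTo_act_mul (mapsTo_act_of_commute (Omega2.mul_mem hM Kmat_mem) hMK)
    mapsTo_act_Kmat
  rwa [mul_assoc, Kmat_mul_self, mul_one] at h

lemma eq_pm_one_or_eq_pm_qR {A : Mat2R} (hc : A * qR = qR * A) (ho : Aᵀ * A = 1) :
    A = 1 ∨ A = -1 ∨ A = qR ∨ A = -qR := by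
  obtain ⟨h₁₁, h₁₀⟩ := entries_of_mul_qR_eq_qR_mul hc
  have o₀₀ : A 0 0 * A 0 0 + A 0 1 * A 0 1 = 1 := by
    simpa [mul_apply, Fin.sum_univ_two, h₁₀] using congrFun (congrFun ho 0) 0
  have o₀₁ : A 0 0 * A 0 1 + A 0 1 * A 0 0 = 0 := by
    simpa [mul_apply, Fin.sum_univ_two, h₁₀, h₁₁] using congrFun (congrFun ho 0) 1
  rw [eta_fin_two A, h₁₁, h₁₀]
  generalize A 0 0 = a, A 0 1 = b at o₀₀ o₀₁ ⊢
  rcases mul_eq_zero.1 (by linear_combination o₀₁ / 2 : a * b = 0) with rfl | rfl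
  · rcases mul_self_eq_one_iff.1 (by linear_combination o₀₀ : b * b = 1) with rfl | rfl
    · exact Or.inr (Or.inr (Or.inl rfl))
    · exact Or.inr (Or.inr (Or.inr (by ext i j; fin_cases i <;> fin_cases j <;> simp [qR])))
  · rcases mul_self_eq_one_iff.1 (by linear_combination o₀₀ : a * a = 1) with rfl | rfl
    · exact Or.inl one_fin_two.symm
    · exact Or.inr (Or.inl (by ext i j; fin_cases i <;> fin_cases j <;> simp))

lemma smul_one_mem_Hhat {t : ℂ} (ht : 0 < t.im) : t • (1 : Mat2) ∈ Hhat := by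
  simp [Hhat, ht]

lemma toBlocks_of_act_eq_self {N : Mat4} (hfix : ∀ Z ∈ Hhat, act N Z = Z) :
    N.toBlocks₂₁ = 0 ∧ N.toBlocks₁₂ = 0 ∧ N.toBlocks₂₂ = N.toBlocks₁₁ ∧
      N.toBlocks₁₁ * qR = qR * N.toBlocks₁₁ := by
  have hP : Set.MapsTo (act N) Hhat Hhat := fun Z hZ => (hfix Z hZ).symm ▸ hZ
  have key : ∀ Z ∈ Hhat, actNum N Z = Z * actDen N Z := fun Z hZ => by
    rw [← act_mul_actDen (isUnit_det_actDen hP hZ), hfix Z hZ]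
  simp only [actNum, actDen] at key
  set A := N.toBlocks₁₁.map ofReal
  set B := N.toBlocks₁₂.map ofReal
  set C := N.toBlocks₂₁.map ofReal
  set D := N.toBlocks₂₂.map ofReal
  have scalar : ∀ t : ℂ, 0 < t.im → t • A + B = (t * t) • C + t • D := fun t ht => by
    simpa [mul_add, smul_smul] using key _ (smul_one_mem_Hhat ht)
  -- three values of `t` determine the quadratic polynomial `t² C + t (D - A) - B`
  have e₁ := scalar I (by simp)
  have e₂ := scalar (2 * I) (by simp)
  have e₃ := scalar (3 * I) (by simp)
  have hC : C = 0 := by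
    linear_combination (norm := skip) (1/2 : ℂ) • e₃ - e₂ + (1/2 : ℂ) • e₁
    match_scalars <;> grind [I_sq]
  have hAD : A = D := by
    linear_combination (norm := skip) (-I) • (e₂ - e₁) + (3 * I) • hC
    match_scalars <;> grind [I_sq]
  have hB : B = 0 := by
    linear_combination (norm := skip) e₁ - I • hAD - hC
    match_scalars <;> grind [I_sq]
  have hAq : A * qR.map ofReal = qR.map ofReal * A := by
    have e := key ((2 * I) • 1 + I • qR.map ofReal) (by simp [Hhat, qR])
    rw [hB, hC, ← hAD] at e
    simp only [zero_mul, zero_add, add_zero, mul_add, add_mul, Matrix.mul_smul, Matrix.smul_mul,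
      mul_one, one_mul, add_right_inj] at e
    exact smul_right_injective _ I_ne_zero e
  have inj : Function.Injective fun X : Mat2R => X.map ofReal := map_injective ofReal_injective
  exact ⟨inj (by simpa using hC), inj (by simpa using hB), inj hAD.symm,
    inj (by simpa [map_ofReal_mul] using hAq)⟩

lemma eq_pm_one_or_eq_pm_Qmat_of_act_eq_self {N : Mat4} (hN : N ∈ Omega2)
    (hfix : ∀ Z ∈ Hhat, act N Z = Z) : N = 1 ∨ N = -1 ∨ N = Qmat ∨ N = -Qmat := by
  obtain ⟨hC, hB, hD, hAq⟩ := toBlocks_of_act_eq_self hfix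
  have hAA : N.toBlocks₁₁ᵀ * N.toBlocks₁₁ = 1 := by
    simpa [hC, hD] using Omega2.transpose_toBlocks₁₁_mul_toBlocks₂₂_sub hN
  rw [← fromBlocks_toBlocks N, hB, hC, hD]
  rcases eq_pm_one_or_eq_pm_qR hAq hAA with h | h | h | h <;> rw [h]
  · exact Or.inl fromBlocks_one
  · exact Or.inr (Or.inl (by rw [← fromBlocks_one, fromBlocks_neg, neg_zero]))
  · exact Or.inr (Or.inr (Or.inl rfl))
  · exact Or.inr (Or.inr (Or.inr (by rw [Qmat, fromBlocks_neg, neg_zero])))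

lemma commute_or_anticommute_of_mapsTo {M : Mat4} (hM : M ∈ Omega2)
    (hP : Set.MapsTo (act M) Hhat Hhat) : M * Qmat = Qmat * M ∨ M * Qmat = -(Qmat * M) := by
  have hu := Omega2.isUnit_det hM
  have hQMQ : Set.MapsTo (act (Qmat * M * Qmat)) Hhat Hhat :=
    mapsTo_act_mul (mapsTo_act_mul mapsTo_act_Qmat hP) mapsTo_act_Qmat
  set N := M⁻¹ * (Qmat * M * Qmat) with hN
  have hfix : ∀ Z ∈ Hhat, act N Z = Z := fun Z hZ =>
    calc act N Z = act M⁻¹ (act (Qmat * M) (act Qmat Z)) := by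
          rw [act_mul (isUnit_det_actDen hQMQ hZ), act_mul (isUnit_det_actDen mapsTo_act_Qmat hZ)]
      _ = act M⁻¹ (act Qmat (act M Z)) := by rw [act_Qmat hZ, act_mul (isUnit_det_actDen hP hZ)]
      _ = act M⁻¹ (act M Z) := by rw [act_Qmat (hP hZ)]
      _ = Z := by rw [← act_mul (isUnit_det_actDen hP hZ), nonsing_inv_mul _ hu, act_one]
  have hNmem : N ∈ Omega2 :=
    Omega2.mul_mem (Omega2.inv_mem hM) (Omega2.mul_mem (Omega2.mul_mem Qmat_mem hM) Qmat_mem)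
  have hQM : Qmat * M = M * (N * Qmat) := by
    simp only [hN, ← mul_assoc, mul_nonsing_inv _ hu, one_mul]
    rw [mul_assoc _ Qmat Qmat, Qmat_mul_self, mul_one]
  have hMu : IsUnit M := (isUnit_iff_isUnit_det M).2 hu
  rcases eq_pm_one_or_eq_pm_Qmat_of_act_eq_self hNmem hfix with h | h | h | h <;>
    simp only [h, one_mul, neg_mul, Qmat_mul_self, mul_neg, mul_one] at hQM
  · exact Or.inl hQM.symm
  · exact Or.inr (by rw [hQM, neg_neg])
  · exact absurd (hMu.mul_left_inj.1 (by rw [hQM, one_mul])) Qmat_ne_one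
  · exact absurd (hMu.mul_left_inj.1 (by rw [hQM, neg_one_mul])) Qmat_ne_neg_one

lemma inv_mul_Qmat_of_commute {M : Mat4} (hu : IsUnit M.det) (h : M * Qmat = Qmat * M) :
    M⁻¹ * Qmat = Qmat * M⁻¹ := by
  calc M⁻¹ * Qmat = M⁻¹ * (Qmat * M) * M⁻¹ := by
        rw [← mul_assoc, mul_nonsing_inv_cancel_right _ _ hu]
    _ = Qmat * M⁻¹ := by rw [← h, nonsing_inv_mul_cancel_left _ _ hu]

lemma inv_mul_Qmat_of_anticommute {M : Mat4} (hu : IsUnit M.det) (h : M * Qmat = -(Qmat * M)) :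
    M⁻¹ * Qmat = -(Qmat * M⁻¹) := by
  calc M⁻¹ * Qmat = M⁻¹ * (Qmat * M) * M⁻¹ := by
        rw [← mul_assoc, mul_nonsing_inv_cancel_right _ _ hu]
    _ = -(Qmat * M⁻¹) := by
        rw [← neg_neg (Qmat * M), ← h, mul_neg, neg_mul, nonsing_inv_mul_cancel_left _ _ hu]

lemma mapsTo_act_iff {M : Mat4} (hM : M ∈ Omega2) :
    Set.MapsTo (act M) Hhat Hhat ↔ M * Qmat = Qmat * M ∨ M * Qmat = -(Qmat * M) :=
  ⟨commute_or_anticommute_of_mapsTo hM,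
    fun h => h.elim (mapsTo_act_of_commute hM) (mapsTo_act_of_anticommute hM)⟩

lemma OmegaHat.inv_mem {M : Mat4} (hM : M ∈ OmegaHat) : M⁻¹ ∈ OmegaHat := by
  have hu := Omega2.isUnit_det hM.1
  refine ⟨Omega2.inv_mem hM.1, (mapsTo_act_iff (Omega2.inv_mem hM.1)).2 ?_⟩
  rcases (mapsTo_act_iff hM.1).1 hM.2 with h | h
  · exact Or.inl (inv_mul_Qmat_of_commute hu h)
  · exact Or.inr (inv_mul_Qmat_of_anticommute hu h)

/-- `M ∈ Ω₂` maps `Ĥ₂` into `Ĥ₂` iff `MQ = ±QM`; consequently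
`Ω̂₂` is a subgroup of `Ω₂` acting on `Ĥ₂` by `(M, Z) ↦ M<Z>`. -/
theorem stmt_1 :
    (∀ M ∈ Omega2, (∀ Z ∈ Hhat, act M Z ∈ Hhat) ↔
      (M * Qmat = Qmat * M ∨ M * Qmat = -(Qmat * M))) ∧
    (1 : Mat4) ∈ OmegaHat ∧
    (∀ M ∈ OmegaHat, ∀ N ∈ OmegaHat, M * N ∈ OmegaHat) ∧
    (∀ M ∈ OmegaHat, M⁻¹ ∈ OmegaHat) ∧
    (∀ Z ∈ Hhat, act 1 Z = Z) ∧
    (∀ M ∈ OmegaHat, ∀ N ∈ OmegaHat, ∀ Z ∈ Hhat, act (M * N) Z = act M (act N Z)) := by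
  refine ⟨fun M hM => mapsTo_act_iff hM, ⟨Omega2.one_mem, fun Z hZ => by rwa [act_one]⟩,
    fun M hM N hN => ⟨Omega2.mul_mem hM.1 hN.1, mapsTo_act_mul hM.2 hN.2⟩,
    fun M hM => OmegaHat.inv_mem hM, fun Z _ => act_one Z,
    fun M _ N hN Z hZ => act_mul (isUnit_det_actDen hN.2 hZ)⟩
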